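/- Let R ∈ ℝ^m and S ∈ ℝ^n be nonnegative real vectors with equal component sums. There exists a nonnegative real m×n matrix A with row sum vector R and column sum vector S satisfying ρ_π A = A (i.e. a_{i,j} = a_{m+1−i, n+1−j} for all i,j) if and only if R and S are both palindromic. Moreover, if R and S have nonnegative integer components, there exists such a matrix with nonnegative integer entries if and only if R and S are both palindromic. -/

import Mathlib

/-!
Rotating a matrix by π reverses each row and carries row `i` to row `rev i`, so the row and column
sums of a centrosymmetric matrix are palindromic. Conversely, over an ordered field the rank-one
matrix `R i * S j / T`, with `T` the common total, is centrosymmetric once `R` and `S` are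
palindromic. Over ℕ, cut `[0, T)` into the consecutive blocks `I i = [P i, P (i + 1))` of lengths
`R i`, where `P` are the prefix sums of `R`, and likewise into blocks `J j` of lengths `S j`, and
let `A i j = #(I i ∩ J j)` (the north-west corner rule). For palindromic `R` and `S` the
reflection `x ↦ T - 1 - x` carries `I i` onto `I (rev i)` and `J j` onto `J (rev j)`, so `A` is
centrosymmetric.
-/

open Finset

variable {m n : ℕ}

section Necessity

variable {M : Type*} [AddCommMonoid M] {A : Matrix (Fin m) (Fin n) M}

theorem sum_row_eq_sum_row_rev_of_centrosymmetric (hA : ∀ i j, A i j = A i.rev j.rev)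
    (i : Fin m) : ∑ j, A i j = ∑ j, A i.rev j :=
  Fintype.sum_equiv Fin.revPerm _ _ fun j => hA i j

theorem sum_col_eq_sum_col_rev_of_centrosymmetric (hA : ∀ i j, A i j = A i.rev j.rev)
    (j : Fin n) : ∑ i, A i j = ∑ i, A i j.rev :=
  Fintype.sum_equiv Fin.revPerm _ _ fun i => hA i j

end Necessity

section OrderedField

variable {K : Type*} [Field K] [LinearOrder K] [IsStrictOrderedRing K]

theorem mul_sum_div_sum_of_nonneg {ι : Type*} [Fintype ι] {f : ι → K} (hf : ∀ i, 0 ≤ f i)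
    (i : ι) : f i * (∑ k, f k) / ∑ k, f k = f i := by
  rcases eq_or_ne (∑ k, f k) 0 with h | h
  · simp [(sum_eq_zero_iff_of_nonneg fun k _ => hf k).1 h i (mem_univ i)]
  · exact mul_div_cancel_right₀ _ h

theorem exists_nonneg_centrosymmetric_iff {R : Fin m → K} {S : Fin n → K}
    (hR : ∀ i, 0 ≤ R i) (hS : ∀ j, 0 ≤ S j) (hsum : ∑ i, R i = ∑ j, S j) :
    (∃ A : Matrix (Fin m) (Fin n) K, (∀ i j, 0 ≤ A i j) ∧ (∀ i, ∑ j, A i j = R i) ∧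
        (∀ j, ∑ i, A i j = S j) ∧ ∀ i j, A i j = A i.rev j.rev) ↔
      (∀ i, R i = R i.rev) ∧ ∀ j, S j = S j.rev := by
  constructor
  · rintro ⟨A, -, hrow, hcol, hA⟩
    exact ⟨fun i => by rw [← hrow, ← hrow, sum_row_eq_sum_row_rev_of_centrosymmetric hA],
      fun j => by rw [← hcol, ← hcol, sum_col_eq_sum_col_rev_of_centrosymmetric hA]⟩
  · rintro ⟨hpR, hpS⟩
    refine ⟨fun i j => R i * S j / ∑ k, R k,
      fun i j => div_nonneg (mul_nonneg (hR i) (hS j)) (sum_nonneg fun k _ => hR k),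
      fun i => ?_, fun j => ?_, fun i j => by dsimp only; rw [hpR i, hpS j]⟩
    · rw [← sum_div, ← mul_sum, ← hsum, mul_sum_div_sum_of_nonneg hR]
    · rw [← sum_div, ← sum_mul, hsum, mul_comm, mul_sum_div_sum_of_nonneg hS]

end OrderedField

section NorthwestCorner

variable (r : Fin m → ℕ) (s : Fin n → ℕ)

def prefixSum (k : ℕ) : ℕ := ∑ i ∈ univ.filter (fun i : Fin m => (i : ℕ) < k), r i

theorem prefixSum_zero : prefixSum r 0 = 0 := by
  simp [prefixSum]

theorem prefixSum_succ (i : Fin m) : prefixSum r (i + 1) = prefixSum r i + r i := by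
  have : univ.filter (fun j : Fin m => (j : ℕ) < i + 1) =
      insert i (univ.filter fun j : Fin m => (j : ℕ) < i) := by
    ext j
    simp [Fin.ext_iff, le_iff_eq_or_lt]
  rw [prefixSum, prefixSum, this, sum_insert (by simp), add_comm]

theorem prefixSum_mono : Monotone (prefixSum r) := fun _ _ hkl =>
  sum_le_sum_of_subset (monotone_filter_right _ fun _ _ hi => lt_of_lt_of_le hi hkl)

theorem prefixSum_of_le {k : ℕ} (hk : m ≤ k) : prefixSum r k = ∑ i, r i := by
  rw [prefixSum, filter_true_of_mem fun i _ => lt_of_lt_of_le i.isLt hk]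

theorem prefixSum_le_sum (k : ℕ) : prefixSum r k ≤ ∑ i, r i :=
  sum_le_sum_of_subset (filter_subset _ _)

variable {r} in
theorem prefixSum_sub_add (hr : ∀ i, r i = r i.rev) (k : ℕ) :
    prefixSum r (m - k) + prefixSum r k = ∑ i, r i := by
  have : prefixSum r (m - k) = ∑ i ∈ univ.filter (fun i : Fin m => ¬(i : ℕ) < k), r i :=
    sum_equiv Fin.revPerm
      (fun i => by simp only [mem_filter, mem_univ, true_and, Fin.revPerm_apply, Fin.val_rev]; omega)
      fun i _ => hr i
  rw [this, add_comm, prefixSum, sum_filter_add_sum_filter_not]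

variable {r} in
theorem prefixSum_rev_add (hr : ∀ i, r i = r i.rev) (i : Fin m) :
    prefixSum r i.rev + prefixSum r (i + 1) = ∑ i, r i := by
  rw [Fin.val_rev]
  exact prefixSum_sub_add hr _

variable {r} in
theorem prefixSum_rev_succ_add (hr : ∀ i, r i = r i.rev) (i : Fin m) :
    prefixSum r (i.rev + 1) + prefixSum r i = ∑ i, r i := by
  rw [Fin.val_rev, Nat.sub_add_eq, Nat.sub_add_cancel (Nat.sub_pos_of_lt i.isLt)]
  exact prefixSum_sub_add hr _

theorem sum_card_inter_Ico_of_monotone (t : Finset ℕ) {q : ℕ → ℕ} (hq : Monotone q) (n : ℕ) :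
    ∑ j ∈ range n, #(t ∩ Ico (q j) (q (j + 1))) = #(t ∩ Ico (q 0) (q n)) := by
  induction n with
  | zero => simp
  | succ n ih =>
    rw [sum_range_succ, ih, ← card_union_of_disjoint, ← inter_union_distrib_left,
      Ico_union_Ico_eq_Ico (hq n.zero_le) (hq n.le_succ)]
    exact (Ico_disjoint_Ico_consecutive _ _ _).mono inter_subset_right inter_subset_right

def northwestCorner : Matrix (Fin m) (Fin n) ℕ := Matrix.of fun i j =>
  #(Ico (prefixSum r i) (prefixSum r (i + 1)) ∩ Ico (prefixSum s j) (prefixSum s (j + 1)))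

theorem northwestCorner_apply (i : Fin m) (j : Fin n) : northwestCorner r s i j =
    #(Ico (prefixSum r i) (prefixSum r (i + 1)) ∩ Ico (prefixSum s j) (prefixSum s (j + 1))) :=
  rfl

theorem northwestCorner_transpose : (northwestCorner r s).transpose = northwestCorner s r := by
  ext j i
  rw [Matrix.transpose_apply, northwestCorner_apply, northwestCorner_apply, inter_comm]

variable {r s}

theorem sum_northwestCorner_row (hsum : ∑ i, r i = ∑ j, s j) (i : Fin m) :
    ∑ j, northwestCorner r s i j = r i := by
  have hblock :
      Ico (prefixSum r i) (prefixSum r (i + 1)) ⊆ Ico (prefixSum s 0) (prefixSum s n) := by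
    rw [prefixSum_zero, prefixSum_of_le s le_rfl, ← hsum]
    exact Ico_subset_Ico (Nat.zero_le _) (prefixSum_le_sum r _)
  simp only [northwestCorner_apply]
  rw [Fin.sum_univ_eq_sum_range (fun j => #(_ ∩ Ico (prefixSum s j) (prefixSum s (j + 1)))),
    sum_card_inter_Ico_of_monotone _ (prefixSum_mono s), inter_eq_left.2 hblock, Nat.card_Ico,
    prefixSum_succ, Nat.add_sub_cancel_left]

theorem sum_northwestCorner_col (hsum : ∑ i, r i = ∑ j, s j) (j : Fin n) :
    ∑ i, northwestCorner r s i j = s j := by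
  rw [← sum_northwestCorner_row hsum.symm j, ← northwestCorner_transpose r s]
  rfl

theorem northwestCorner_rev (hr : ∀ i, r i = r i.rev) (hs : ∀ j, s j = s j.rev)
    (hsum : ∑ i, r i = ∑ j, s j) (i : Fin m) (j : Fin n) :
    northwestCorner r s i j = northwestCorner r s i.rev j.rev := by
  have := prefixSum_rev_add hr i
  have := prefixSum_rev_succ_add hr i
  have := prefixSum_rev_add hs j
  have := prefixSum_rev_succ_add hs j
  have := prefixSum_succ r i
  have := prefixSum_succ s j
  simp only [northwestCorner_apply, Ico_inter_Ico, Nat.card_Ico]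
  omega

end NorthwestCorner

theorem exists_nat_centrosymmetric_iff {r : Fin m → ℕ} {s : Fin n → ℕ}
    (hsum : ∑ i, r i = ∑ j, s j) :
    (∃ A : Matrix (Fin m) (Fin n) ℕ, (∀ i, ∑ j, A i j = r i) ∧ (∀ j, ∑ i, A i j = s j) ∧
        ∀ i j, A i j = A i.rev j.rev) ↔
      (∀ i, r i = r i.rev) ∧ ∀ j, s j = s j.rev := by
  constructor
  · rintro ⟨A, hrow, hcol, hA⟩
    exact ⟨fun i => by rw [← hrow, ← hrow, sum_row_eq_sum_row_rev_of_centrosymmetric hA],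
      fun j => by rw [← hcol, ← hcol, sum_col_eq_sum_col_rev_of_centrosymmetric hA]⟩
  · rintro ⟨hr, hs⟩
    exact ⟨northwestCorner r s, sum_northwestCorner_row hsum, sum_northwestCorner_col hsum,
      northwestCorner_rev hr hs hsum⟩

theorem centrosymmetric_transportation (m n : ℕ) (R : Fin m → ℝ) (S : Fin n → ℝ)
    (hR : ∀ i, 0 ≤ R i) (hS : ∀ j, 0 ≤ S j)
    (hsum : ∑ i, R i = ∑ j, S j) :
    ((∃ A : Matrix (Fin m) (Fin n) ℝ,
        (∀ i j, 0 ≤ A i j) ∧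
        (∀ i, ∑ j, A i j = R i) ∧
        (∀ j, ∑ i, A i j = S j) ∧
        (∀ i j, A i j = A i.rev j.rev)) ↔
      ((∀ i, R i = R i.rev) ∧ (∀ j, S j = S j.rev)))
    ∧ ((∀ i, ∃ k : ℕ, R i = k) → (∀ j, ∃ k : ℕ, S j = k) →
      ((∃ A : Matrix (Fin m) (Fin n) ℕ,
          (∀ i, ((∑ j, A i j : ℕ) : ℝ) = R i) ∧
          (∀ j, ((∑ i, A i j : ℕ) : ℝ) = S j) ∧
          (∀ i j, A i j = A i.rev j.rev)) ↔
        ((∀ i, R i = R i.rev) ∧ (∀ j, S j = S j.rev)))) := by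
  refine ⟨exists_nonneg_centrosymmetric_iff hR hS hsum, fun hRk hSk => ?_⟩
  choose r hr using hRk
  choose s hs using hSk
  simp only [hr, hs, Nat.cast_inj, ← Nat.cast_sum] at hsum ⊢
  exact exists_nat_centrosymmetric_iff hsum
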